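/- Let T = Z(A) ∩ {x₁^{β₁}x₂^{β₂} : β ∈ ℕ²}, a multiplicative set of central elements of A. Then the following are equivalent: (1) A is not of type (C7a); (2) Z(A_{x₁x₂}) = T⁻¹Z(A), i.e. the centre of A_{x₁x₂} equals the localization of Z(A) at T (inside A_{x₁x₂}). -/

import Mathlib

noncomputable section

variable {K : Type*} [Field K] {A : Type*} [Ring A] [Algebra K A]

/-- `A = A(q,α,μ)`: the defining relations of the bi-quadratic algebra of class II.1
together with the PBW-basis property
(`{x₁^{β₁} x₂^{β₂} x₃^{i}}` is a `K`-basis of `A`). -/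
def IsBiQuad (q α μ : K) (x₁ x₂ x₃ : A) : Prop :=
  q ≠ 0 ∧ q ≠ 1 ∧
  ((α = 1 ∧ μ ≠ -1) ∨ (α = 0 ∧ μ = 1)) ∧
  x₂ * x₁ = algebraMap K A q * (x₁ * x₂) ∧
  x₃ * x₁ = x₁ * (x₃ + algebraMap K A α) ∧
  x₃ * x₂ = x₂ * (x₃ + algebraMap K A μ) ∧
  ∀ a : A, ∃! f : ℕ × ℕ × ℕ →₀ K,
    a = f.sum fun v c => c • (x₁ ^ v.1 * x₂ ^ v.2.1 * x₃ ^ v.2.2)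

/-- `q` is not a root of unity. -/
def NotRootOfUnity (q : K) : Prop := ∀ m : ℕ, 0 < m → q ^ m ≠ 1

/-- membership in the prime subfield `F_p` (when `char K = p > 0`). -/
def InPrimeSubfield (μ : K) : Prop := ∃ k : ℕ, μ = (k : K)

/-- membership in the copy of `ℚ` inside `K` (when `char K = 0`). -/
def InRatSubfield (μ : K) : Prop := ∃ r : ℚ, μ = (r : K)

def CaseC1 (p : ℕ) (q : K) : Prop := NotRootOfUnity q ∧ p = 0

def CaseC2 (p : ℕ) (q α μ : K) : Prop :=
  NotRootOfUnity q ∧ 0 < p ∧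
    ((α = 1 ∧ InPrimeSubfield μ ∧ μ ≠ -1) ∨ (α = 0 ∧ μ = 1))

def CaseC3 (p : ℕ) (q α μ : K) : Prop :=
  NotRootOfUnity q ∧ 0 < p ∧ α = 1 ∧ ¬ InPrimeSubfield μ

def CaseC4 (p n : ℕ) (q α μ : K) : Prop :=
  0 < n ∧ IsPrimitiveRoot q n ∧ p = 0 ∧ α = 1 ∧ μ = 0

def CaseC5 (p n : ℕ) (q α μ : K) : Prop :=
  0 < n ∧ IsPrimitiveRoot q n ∧ p = 0 ∧ α = 0 ∧ μ = 1

def CaseC6 (p n μ₁ μ₂ : ℕ) (q α μ : K) : Prop :=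
  0 < n ∧ IsPrimitiveRoot q n ∧ p = 0 ∧ α = 1 ∧
    0 < μ₁ ∧ 0 < μ₂ ∧ Nat.Coprime μ₁ μ₂ ∧ μ₁ ≠ μ₂ ∧ (μ₂ : K) * μ = -(μ₁ : K)

def CaseC7a (p n μ₁ μ₂ : ℕ) (q α μ : K) : Prop :=
  0 < n ∧ IsPrimitiveRoot q n ∧ p = 0 ∧ α = 1 ∧
    0 < μ₁ ∧ 0 < μ₂ ∧ Nat.Coprime μ₁ μ₂ ∧ (μ₂ : K) * μ = (μ₁ : K)

def CaseC7b (p n : ℕ) (q α μ : K) : Prop :=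
  0 < n ∧ IsPrimitiveRoot q n ∧ p = 0 ∧ α = 1 ∧ ¬ InRatSubfield μ

/-- case (C7): `μ ∉ ℚ_- ∪ {0}` (the union of cases (C7a) and (C7b)). -/
def CaseC7 (p n : ℕ) (q α μ : K) : Prop :=
  0 < n ∧ IsPrimitiveRoot q n ∧ p = 0 ∧ α = 1 ∧
    ¬ (μ = 0 ∨ ∃ r : ℚ, r < 0 ∧ μ = (r : K))

def CaseC8 (p n : ℕ) (q α μ : K) : Prop :=
  0 < n ∧ IsPrimitiveRoot q n ∧ 0 < p ∧ ¬ p ∣ n ∧ α = 1 ∧ μ = 0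

def CaseC9 (p n : ℕ) (q α μ : K) : Prop :=
  0 < n ∧ IsPrimitiveRoot q n ∧ 0 < p ∧ ¬ p ∣ n ∧ α = 0 ∧ μ = 1

def CaseC10 (p n : ℕ) (q α μ : K) : Prop :=
  0 < n ∧ IsPrimitiveRoot q n ∧ 0 < p ∧ ¬ p ∣ n ∧ α = 1 ∧ ¬ InPrimeSubfield μ

def CaseC11 (p n : ℕ) (q α μ : K) : Prop :=
  0 < n ∧ IsPrimitiveRoot q n ∧ 0 < p ∧ ¬ p ∣ n ∧ α = 1 ∧
    InPrimeSubfield μ ∧ μ ≠ 0 ∧ μ ≠ -1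

/-- `f_μ = ∏_{a,b ∈ F_p} (x₃ - a - bμ)`, as an element of `A`. -/
def fmuElt (p : ℕ) (μ : K) (x₃ : A) : A :=
  ((List.range p).map fun (a : ℕ) =>
    ((List.range p).map fun (b : ℕ) =>
      x₃ - algebraMap K A ((a : K) + (b : K) * μ)).prod).prod

/-- `B` is the localization `A_{x₁x₂}` of `A` at the Ore set `{x₁^i x₂^j}`:
the canonical map `ι` is injective, `x₁` and `x₂` become units (with the given
inverses `y₁`, `y₂`), and every element of `B` is a right fraction. -/
def IsOreLoc {K : Type*} [Field K] {A : Type*} [Ring A] [Algebra K A]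
    {B : Type*} [Ring B] [Algebra K B] (ι : A →ₐ[K] B)
    (x₁ x₂ : A) (y₁ y₂ : B) : Prop :=
  Function.Injective ι ∧
  ι x₁ * y₁ = 1 ∧ y₁ * ι x₁ = 1 ∧ ι x₂ * y₂ = 1 ∧ y₂ * ι x₂ = 1 ∧
  ∀ b : B, ∃ (a : A) (i j : ℕ), b * ι (x₁ ^ i * x₂ ^ j) = ι a


section BQAuxSection
open Finset
namespace BQAux
variable {K : Type*} [Field K] {A : Type*} [Ring A] [Algebra K A]

/-- the PBW monomial -/
def mon (x₁ x₂ x₃ : A) (v : ℕ × ℕ × ℕ) : A := x₁ ^ v.1 * x₂ ^ v.2.1 * x₃ ^ v.2.2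

section rel
variable {q α μ : K} {x₁ x₂ x₃ : A}

lemma L1 (h21 : x₂ * x₁ = q • (x₁ * x₂)) (k : ℕ) :
    x₂ * x₁ ^ k = q ^ k • (x₁ ^ k * x₂) := by
  induction k with
  | zero => simp
  | succ k ih =>
    rw [pow_succ, ← mul_assoc, ih, smul_mul_assoc, mul_assoc, h21, mul_smul_comm,
      smul_smul, pow_succ]
    ring_nf
    rw [mul_assoc]

lemma L1' (h21 : x₂ * x₁ = q • (x₁ * x₂)) (k l : ℕ) :
    x₂ ^ l * x₁ ^ k = q ^ (k * l) • (x₁ ^ k * x₂ ^ l) := by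
  induction l with
  | zero => simp
  | succ l ih =>
    rw [pow_succ, mul_assoc, L1 h21 k, mul_smul_comm, ← mul_assoc, ih, smul_mul_assoc,
      smul_smul, mul_assoc, ← pow_succ, ← pow_add]
    congr 2
    ring

lemma L3a (h31 : x₃ * x₁ = x₁ * x₃ + α • x₁) (k : ℕ) :
    x₃ * x₁ ^ k = x₁ ^ k * x₃ + ((k : K) * α) • x₁ ^ k := by
  induction k with
  | zero => simp
  | succ k ih =>
    rw [pow_succ, ← mul_assoc, ih, add_mul, smul_mul_assoc, mul_assoc, h31, mul_add,
      mul_smul_comm, ← mul_assoc, ← pow_succ]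
    push_cast
    rw [add_mul, one_mul, add_smul]
    abel

lemma Lbin (h31 : x₃ * x₁ = x₁ * x₃ + α • x₁) (d : ℕ) :
    x₃ ^ d * x₁ = x₁ * (x₃ + algebraMap K A α) ^ d := by
  induction d with
  | zero => simp
  | succ d ih =>
    have hy : (x₃ + algebraMap K A α) ^ d * algebraMap K A α
        = α • (x₃ + algebraMap K A α) ^ d := by
      rw [← Algebra.commutes α _, Algebra.smul_def]
    calc x₃ ^ (d+1) * x₁ = x₃ ^ d * (x₃ * x₁) := by rw [pow_succ, mul_assoc]
      _ = (x₃ ^ d * x₁) * x₃ + α • (x₃ ^ d * x₁) := by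
          rw [h31, mul_add, mul_smul_comm, mul_assoc]
      _ = x₁ * ((x₃ + algebraMap K A α) ^ d * x₃)
            + x₁ * ((x₃ + algebraMap K A α) ^ d * algebraMap K A α) := by
          rw [ih, mul_assoc, hy, mul_smul_comm]
      _ = x₁ * (x₃ + algebraMap K A α) ^ (d+1) := by
          rw [← mul_add, ← mul_add, ← pow_succ]

lemma Lexpand (t : K) (d : ℕ) :
    (x₃ + algebraMap K A t) ^ d
      = ∑ s ∈ range (d + 1), (t ^ (d - s) * (d.choose s : K)) • x₃ ^ s := by
  have hc : Commute x₃ (algebraMap K A t) := (Algebra.commutes t x₃).symm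
  rw [hc.add_pow]
  refine Finset.sum_congr rfl fun s _ => ?_
  rw [← map_pow, show ((d.choose s : ℕ) : A) = algebraMap K A ((d.choose s : ℕ) : K) by simp,
    mul_assoc, ← map_mul, ← Algebra.commutes, Algebra.smul_def]

end rel

section mon
variable {q α μ : K} {x₁ x₂ x₃ : A}

lemma L1r (h21 : x₂ * x₁ = q • (x₁ * x₂)) (l : ℕ) :
    x₂ ^ l * x₁ = q ^ l • (x₁ * x₂ ^ l) := by simpa using L1' h21 1 l

lemma Mx1 (v : ℕ × ℕ × ℕ) :
    x₁ * mon x₁ x₂ x₃ v = mon x₁ x₂ x₃ (v.1 + 1, v.2.1, v.2.2) := by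
  simp only [mon, ← mul_assoc, ← pow_succ']

lemma Mx2 (h21 : x₂ * x₁ = q • (x₁ * x₂)) (v : ℕ × ℕ × ℕ) :
    x₂ * mon x₁ x₂ x₃ v = q ^ v.1 • mon x₁ x₂ x₃ (v.1, v.2.1 + 1, v.2.2) := by
  obtain ⟨a, b, c⟩ := v
  simp only [mon, ← mul_assoc]
  rw [L1 h21 a, smul_mul_assoc, smul_mul_assoc, mul_assoc (x₁ ^ a) x₂ (x₂ ^ b), ← pow_succ']

lemma Mx3 (h31 : x₃ * x₁ = x₁ * x₃ + α • x₁) (h32 : x₃ * x₂ = x₂ * x₃ + μ • x₂)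
    (v : ℕ × ℕ × ℕ) :
    x₃ * mon x₁ x₂ x₃ v = mon x₁ x₂ x₃ (v.1, v.2.1, v.2.2 + 1)
      + ((v.1 : K) * α + (v.2.1 : K) * μ) • mon x₁ x₂ x₃ v := by
  obtain ⟨a, b, c⟩ := v
  simp only [mon, ← mul_assoc]
  rw [L3a h31 a, add_mul, add_mul, smul_mul_assoc, smul_mul_assoc,
    mul_assoc (x₁ ^ a) x₃ (x₂ ^ b), L3a h32 b, mul_add, mul_smul_comm, ← mul_assoc,
    add_mul, smul_mul_assoc, mul_assoc (x₁ ^ a * x₂ ^ b) x₃ (x₃ ^ c), ← pow_succ', add_smul]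
  abel

lemma Mr3 (v : ℕ × ℕ × ℕ) :
    mon x₁ x₂ x₃ v * x₃ = mon x₁ x₂ x₃ (v.1, v.2.1, v.2.2 + 1) := by
  simp only [mon, mul_assoc, ← pow_succ]

lemma Mr1 (h21 : x₂ * x₁ = q • (x₁ * x₂)) (h31 : x₃ * x₁ = x₁ * x₃ + α • x₁)
    (v : ℕ × ℕ × ℕ) :
    mon x₁ x₂ x₃ v * x₁
      = ∑ s ∈ range (v.2.2 + 1),
          (q ^ v.2.1 * (α ^ (v.2.2 - s) * (v.2.2.choose s : K)))
            • mon x₁ x₂ x₃ (v.1 + 1, v.2.1, s) := by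
  obtain ⟨a, b, c⟩ := v
  simp only [mon]
  calc x₁ ^ a * x₂ ^ b * x₃ ^ c * x₁ = x₁ ^ a * (x₂ ^ b * (x₃ ^ c * x₁)) := by
        simp only [mul_assoc]
    _ = x₁ ^ a * ((x₂ ^ b * x₁) * (x₃ + algebraMap K A α) ^ c) := by
        rw [Lbin h31 c, mul_assoc]
    _ = q ^ b • (x₁ ^ (a+1) * x₂ ^ b * (x₃ + algebraMap K A α) ^ c) := by
        rw [L1r h21 b, smul_mul_assoc, mul_smul_comm]
        congr 1
        simp only [← mul_assoc, ← pow_succ]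
    _ = _ := by
        rw [Lexpand, Finset.mul_sum, Finset.smul_sum]
        refine Finset.sum_congr rfl fun s _ => ?_
        rw [mul_smul_comm, smul_smul, ← mul_assoc]

lemma Mr2 (h32 : x₃ * x₂ = x₂ * x₃ + μ • x₂) (v : ℕ × ℕ × ℕ) :
    mon x₁ x₂ x₃ v * x₂
      = ∑ s ∈ range (v.2.2 + 1),
          (μ ^ (v.2.2 - s) * (v.2.2.choose s : K)) • mon x₁ x₂ x₃ (v.1, v.2.1 + 1, s) := by
  obtain ⟨a, b, c⟩ := v
  simp only [mon]
  calc x₁ ^ a * x₂ ^ b * x₃ ^ c * x₂ = x₁ ^ a * (x₂ ^ b * (x₃ ^ c * x₂)) := by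
        simp only [mul_assoc]
    _ = x₁ ^ a * x₂ ^ (b+1) * (x₃ + algebraMap K A μ) ^ c := by
        rw [Lbin h32 c, ← mul_assoc, ← mul_assoc, mul_assoc (x₁ ^ a) (x₂ ^ b) x₂, ← pow_succ]
    _ = _ := by
        rw [Lexpand, Finset.mul_sum]
        refine Finset.sum_congr rfl fun s _ => ?_
        rw [mul_smul_comm]

end mon

section basis
variable {q α μ : K} {x₁ x₂ x₃ : A}

/-- the PBW property -/
def PBW (x₁ x₂ x₃ : A) : Prop :=
  ∀ a : A, ∃! f : ℕ × ℕ × ℕ →₀ K,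
    a = f.sum fun v c => c • (x₁ ^ v.1 * x₂ ^ v.2.1 * x₃ ^ v.2.2)

lemma PBW.li (h : PBW (K := K) x₁ x₂ x₃) : LinearIndependent K (mon x₁ x₂ x₃) := by
  rw [linearIndependent_iff]
  intro l hl
  have hz : (0 : A) = l.sum fun v c => c • (x₁ ^ v.1 * x₂ ^ v.2.1 * x₃ ^ v.2.2) := by
    simpa [Finsupp.linearCombination_apply, mon] using hl.symm
  exact (h 0).unique hz (by simp)

lemma PBW.mem_span (h : PBW (K := K) x₁ x₂ x₃) (a : A) :
    a ∈ Submodule.span K (Set.range (mon x₁ x₂ x₃)) := by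
  obtain ⟨f, hf, -⟩ := h a
  rw [hf]
  exact Submodule.sum_mem _ fun v _ => Submodule.smul_mem _ _
    (Submodule.subset_span ⟨v, rfl⟩)

/-- the PBW basis -/
def PBW.basis (h : PBW (K := K) x₁ x₂ x₃) : Module.Basis (ℕ × ℕ × ℕ) K A :=
  Module.Basis.mk h.li (fun a _ => h.mem_span a)

lemma PBW.basis_apply (h : PBW (K := K) x₁ x₂ x₃) (v : ℕ × ℕ × ℕ) :
    h.basis v = mon x₁ x₂ x₃ v := Module.Basis.mk_apply _ _ _

lemma PBW.repr_sum_apply (h : PBW (K := K) x₁ x₂ x₃) {σ : Type*} (s : Finset σ)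
    (g : σ → K) (φ : σ → ℕ × ℕ × ℕ) (u : ℕ × ℕ × ℕ) :
    h.basis.repr (∑ t ∈ s, g t • mon x₁ x₂ x₃ (φ t)) u
      = ∑ t ∈ s, if φ t = u then g t else 0 := by
  rw [map_sum, Finset.sum_apply']
  refine Finset.sum_congr rfl fun t _ => ?_
  rw [map_smul, ← h.basis_apply, h.basis.repr_self, Finsupp.smul_apply,
    Finsupp.single_apply, smul_eq_mul]
  split <;> simp

lemma PBW.mon_ne_zero (h : PBW (K := K) x₁ x₂ x₃) (v : ℕ × ℕ × ℕ) :
    mon x₁ x₂ x₃ v ≠ 0 := h.li.ne_zero v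

/-- representation of an element as a sum over the support -/
lemma PBW.eq_sum (h : PBW (K := K) x₁ x₂ x₃) (a : A) (f : ℕ × ℕ × ℕ →₀ K)
    (hf : a = f.sum fun v c => c • (x₁ ^ v.1 * x₂ ^ v.2.1 * x₃ ^ v.2.2)) :
    a = ∑ v ∈ f.support, f v • mon x₁ x₂ x₃ v := hf

lemma PBW.zero_coeffs (h : PBW (K := K) x₁ x₂ x₃) {s : Finset (ℕ × ℕ × ℕ)}
    {g : ℕ × ℕ × ℕ → K} (h0 : ∑ v ∈ s, g v • mon x₁ x₂ x₃ v = 0) :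
    ∀ v ∈ s, g v = 0 :=
  linearIndependent_iff'.mp h.li s g h0

lemma PBW.extract (h : PBW (K := K) x₁ x₂ x₃) (f : ℕ × ℕ × ℕ →₀ K)
    (e1 e2 : ℕ) (t : K) (lam lam' : ℕ × ℕ → K)
    (heq : ∑ v ∈ f.support, (f v * lam (v.1, v.2.1)) • mon x₁ x₂ x₃ (v.1 + e1, v.2.1 + e2, v.2.2)
      = ∑ v ∈ f.support, ∑ s ∈ range (v.2.2 + 1),
          (f v * lam' (v.1, v.2.1) * (t ^ (v.2.2 - s) * (v.2.2.choose s : K)))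
            • mon x₁ x₂ x₃ (v.1 + e1, v.2.1 + e2, s)) :
    ∀ v ∈ f.support, lam (v.1, v.2.1) = lam' (v.1, v.2.1) := by
  intro v hv
  classical
  set S := f.support with hS
  set col : Finset ℕ := (S.filter (fun u => u.1 = v.1 ∧ u.2.1 = v.2.1)).image (fun u => u.2.2)
    with hcol
  have hcolne : col.Nonempty :=
    ⟨v.2.2, Finset.mem_image.2 ⟨v, Finset.mem_filter.2 ⟨hv, rfl, rfl⟩, rfl⟩⟩
  set M : ℕ := col.max' hcolne with hM
  have hMmem : (v.1, v.2.1, M) ∈ S := by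
    have := col.max'_mem hcolne
    rw [← hM] at this
    obtain ⟨u, hu, hu2⟩ := Finset.mem_image.1 this
    obtain ⟨huS, hu1, hu21⟩ := Finset.mem_filter.1 hu
    have : u = (v.1, v.2.1, M) := by
      obtain ⟨u1, u2, u3⟩ := u
      simp_all
    rwa [this] at huS
  have hMmax : ∀ u ∈ S, u.1 = v.1 → u.2.1 = v.2.1 → u.2.2 ≤ M := by
    intro u huS h1 h2
    exact col.le_max' _ (Finset.mem_image.2 ⟨u, Finset.mem_filter.2 ⟨huS, h1, h2⟩, rfl⟩)
  set u₀ : ℕ × ℕ × ℕ := (v.1 + e1, v.2.1 + e2, M) with hu₀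
  have happ := congrArg (fun y => h.basis.repr y u₀) heq
  rw [h.repr_sum_apply, Finset.sum_sigma'] at happ
  rw [h.repr_sum_apply (σ := (_ : ℕ×ℕ×ℕ) × ℕ) _ _ (fun p => (p.1.1 + e1, p.1.2.1 + e2, p.2))] at happ
  have hL : ∑ u ∈ S, (if (u.1 + e1, u.2.1 + e2, u.2.2) = u₀ then f u * lam (u.1, u.2.1) else 0)
      = f (v.1, v.2.1, M) * lam (v.1, v.2.1) := by
    rw [Finset.sum_eq_single_of_mem (v.1, v.2.1, M) hMmem]
    · simp [hu₀]
    · intro u huS hne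
      rw [if_neg]
      intro hc
      apply hne
      rw [hu₀, Prod.ext_iff, Prod.ext_iff] at hc
      obtain ⟨h1, h2, h3⟩ := hc
      obtain ⟨u1, u2, u3⟩ := u
      simp_all [Nat.add_right_cancel h1]
  have hR : ∑ p ∈ S.sigma (fun v' => range (v'.2.2 + 1)),
        (if (p.1.1 + e1, p.1.2.1 + e2, p.2) = u₀ then
          f p.1 * lam' (p.1.1, p.1.2.1) * (t ^ (p.1.2.2 - p.2) * ((p.1.2.2).choose p.2 : K)) else 0)
      = f (v.1, v.2.1, M) * lam' (v.1, v.2.1) := by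
    rw [Finset.sum_eq_single_of_mem (⟨(v.1, v.2.1, M), M⟩ : (_ : ℕ×ℕ×ℕ) × ℕ)]
    · simp [hu₀]
    · exact Finset.mem_sigma.2 ⟨hMmem, Finset.self_mem_range_succ M⟩
    · rintro ⟨u, s⟩ hp hne
      rw [if_neg]
      intro hc
      apply hne
      rw [hu₀, Prod.ext_iff, Prod.ext_iff] at hc
      obtain ⟨h1, h2, h3⟩ := hc
      simp only at h1 h2 h3
      obtain ⟨hpS, hps⟩ := Finset.mem_sigma.1 hp
      have h1' : u.1 = v.1 := Nat.add_right_cancel h1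
      have h2' : u.2.1 = v.2.1 := Nat.add_right_cancel h2
      have hle : u.2.2 ≤ M := hMmax u hpS h1' h2'
      have hge : M ≤ u.2.2 := by
        have hsr : s ∈ range (u.2.2 + 1) := hps
        have hsle : s ≤ u.2.2 := Nat.lt_succ_iff.mp (Finset.mem_range.1 hsr)
        have hs3 : s = M := h3
        omega
      have hu22 : u.2.2 = M := le_antisymm hle hge
      have : u = (v.1, v.2.1, M) := by
        obtain ⟨u1, u2, u3⟩ := u
        simp_all
      subst h3
      simp_all
  rw [hL, hR] at happ
  have hfne : f (v.1, v.2.1, M) ≠ 0 := Finsupp.mem_support_iff.1 hMmem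
  have hvcol : M = M := rfl
  have := mul_left_cancel₀ hfne happ
  exact this

end basis

section conds
variable {q α μ : K} {x₁ x₂ x₃ : A}

lemma PBW.sup3 (h : PBW (K := K) x₁ x₂ x₃)
    (h31 : x₃ * x₁ = x₁ * x₃ + α • x₁) (h32 : x₃ * x₂ = x₂ * x₃ + μ • x₂)
    (a : A) (f : ℕ × ℕ × ℕ →₀ K)
    (ha : a = ∑ v ∈ f.support, f v • mon x₁ x₂ x₃ v) (c : K)
    (hrel : x₃ * a = a * x₃ + c • a) :
    ∀ v ∈ f.support, (v.1 : K) * α + (v.2.1 : K) * μ = c := by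
  have hL : x₃ * a = ∑ v ∈ f.support,
      (f v • mon x₁ x₂ x₃ (v.1, v.2.1, v.2.2 + 1)
        + (f v * ((v.1 : K) * α + (v.2.1 : K) * μ)) • mon x₁ x₂ x₃ v) := by
    rw [ha, Finset.mul_sum]
    refine Finset.sum_congr rfl fun v _ => ?_
    rw [mul_smul_comm, Mx3 h31 h32, smul_add, smul_smul]
  have hR : a * x₃ + c • a = ∑ v ∈ f.support,
      (f v • mon x₁ x₂ x₃ (v.1, v.2.1, v.2.2 + 1) + (f v * c) • mon x₁ x₂ x₃ v) := by
    rw [ha, Finset.sum_mul, Finset.smul_sum, ← Finset.sum_add_distrib]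
    refine Finset.sum_congr rfl fun v _ => ?_
    rw [smul_mul_assoc, Mr3, smul_smul, mul_comm c (f v)]
  have key : ∑ v ∈ f.support,
      (f v * ((v.1 : K) * α + (v.2.1 : K) * μ) - f v * c) • mon x₁ x₂ x₃ v = 0 := by
    have e := hL.symm.trans (hrel.trans hR)
    rw [Finset.sum_add_distrib, Finset.sum_add_distrib] at e
    have e2 := add_left_cancel e
    simp only [sub_smul, Finset.sum_sub_distrib, e2, sub_self]
  intro v hv
  have h0 := h.zero_coeffs key v hv
  have hfv : f v ≠ 0 := Finsupp.mem_support_iff.1 hv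
  have h1 : f v * ((v.1 : K) * α + (v.2.1 : K) * μ - c) = 0 := by
    rw [mul_sub]; exact h0
  rcases mul_eq_zero.1 h1 with h' | h'
  · exact absurd h' hfv
  · exact sub_eq_zero.1 h' 

lemma PBW.supC (h : PBW (K := K) x₁ x₂ x₃)
    (h21 : x₂ * x₁ = q • (x₁ * x₂)) (h32 : x₃ * x₂ = x₂ * x₃ + μ • x₂)
    (a : A) (f : ℕ × ℕ × ℕ →₀ K)
    (ha : a = ∑ v ∈ f.support, f v • mon x₁ x₂ x₃ v) (i : ℕ)
    (hrel : x₂ * a = q ^ i • (a * x₂)) :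
    ∀ v ∈ f.support, q ^ v.1 = q ^ i := by
  have hL : x₂ * a = ∑ v ∈ f.support,
      (f v * q ^ v.1) • mon x₁ x₂ x₃ (v.1 + 0, v.2.1 + 1, v.2.2) := by
    rw [ha, Finset.mul_sum]
    refine Finset.sum_congr rfl fun v _ => ?_
    rw [mul_smul_comm, Mx2 h21, smul_smul, add_zero]
  have hR : q ^ i • (a * x₂) = ∑ v ∈ f.support, ∑ s ∈ range (v.2.2 + 1),
      (f v * q ^ i * (μ ^ (v.2.2 - s) * (v.2.2.choose s : K)))
        • mon x₁ x₂ x₃ (v.1 + 0, v.2.1 + 1, s) := by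
    rw [ha, Finset.sum_mul, Finset.smul_sum]
    refine Finset.sum_congr rfl fun v _ => ?_
    rw [smul_mul_assoc, Mr2 h32, Finset.smul_sum, Finset.smul_sum]
    refine Finset.sum_congr rfl fun s _ => ?_
    rw [smul_smul, smul_smul, add_zero]
    congr 1
    ring
  have heq := hL.symm.trans (hrel.trans hR)
  have := h.extract f 0 1 μ (fun p => q ^ p.1) (fun _ => q ^ i) heq
  intro v hv
  exact this v hv

lemma PBW.supB (h : PBW (K := K) x₁ x₂ x₃)
    (h21 : x₂ * x₁ = q • (x₁ * x₂)) (h31 : x₃ * x₁ = x₁ * x₃ + α • x₁)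
    (a : A) (f : ℕ × ℕ × ℕ →₀ K)
    (ha : a = ∑ v ∈ f.support, f v • mon x₁ x₂ x₃ v) (j : ℕ)
    (hrel : a * x₁ = q ^ j • (x₁ * a)) :
    ∀ v ∈ f.support, q ^ v.2.1 = q ^ j := by
  have hL : q ^ j • (x₁ * a) = ∑ v ∈ f.support,
      (f v * q ^ j) • mon x₁ x₂ x₃ (v.1 + 1, v.2.1 + 0, v.2.2) := by
    rw [ha, Finset.mul_sum, Finset.smul_sum]
    refine Finset.sum_congr rfl fun v _ => ?_
    rw [mul_smul_comm, Mx1, smul_smul, add_zero]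
    congr 1
    ring
  have hR : a * x₁ = ∑ v ∈ f.support, ∑ s ∈ range (v.2.2 + 1),
      (f v * q ^ v.2.1 * (α ^ (v.2.2 - s) * (v.2.2.choose s : K)))
        • mon x₁ x₂ x₃ (v.1 + 1, v.2.1 + 0, s) := by
    rw [ha, Finset.sum_mul]
    refine Finset.sum_congr rfl fun v _ => ?_
    rw [smul_mul_assoc, Mr1 h21 h31, Finset.smul_sum]
    refine Finset.sum_congr rfl fun s _ => ?_
    rw [smul_smul, add_zero]
    congr 1
    ring
  have heq := hL.symm.trans (hrel.symm.trans hR)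
  have := h.extract f 1 0 α (fun _ => q ^ j) (fun p => q ^ p.2) heq
  intro v hv
  exact (this v hv).symm

lemma PBW.factor1 (h : PBW (K := K) x₁ x₂ x₃)
    (a : A) (f : ℕ × ℕ × ℕ →₀ K)
    (ha : a = ∑ v ∈ f.support, f v • mon x₁ x₂ x₃ v)
    (hall : ∀ v ∈ f.support, 1 ≤ v.1) :
    a = x₁ * ∑ v ∈ f.support, f v • mon x₁ x₂ x₃ (v.1 - 1, v.2.1, v.2.2) := by
  rw [ha, Finset.mul_sum]
  refine Finset.sum_congr rfl fun v hv => ?_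
  rw [mul_smul_comm, Mx1, Nat.sub_add_cancel (hall v hv)]

lemma PBW.factor2 (h : PBW (K := K) x₁ x₂ x₃) (hq : q ≠ 0)
    (h21 : x₂ * x₁ = q • (x₁ * x₂))
    (a : A) (f : ℕ × ℕ × ℕ →₀ K)
    (ha : a = ∑ v ∈ f.support, f v • mon x₁ x₂ x₃ v)
    (hall : ∀ v ∈ f.support, 1 ≤ v.2.1) :
    a = x₂ * ∑ v ∈ f.support, ((q ^ v.1)⁻¹ * f v) • mon x₁ x₂ x₃ (v.1, v.2.1 - 1, v.2.2) := by
  rw [ha, Finset.mul_sum]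
  refine Finset.sum_congr rfl fun v hv => ?_
  rw [mul_smul_comm, Mx2 h21, Nat.sub_add_cancel (hall v hv), smul_smul]
  congr 1
  field_simp

lemma PBW.not_x1pow_eq_mul_x2 (h : PBW (K := K) x₁ x₂ x₃)
    (h32 : x₃ * x₂ = x₂ * x₃ + μ • x₂) (m : ℕ) (y : A) :
    x₁ ^ m ≠ y * x₂ := by
  intro he
  obtain ⟨f, hf, -⟩ := h y
  have hy : y * x₂ = ∑ v ∈ f.support, ∑ s ∈ range (v.2.2 + 1),
      (f v * (μ ^ (v.2.2 - s) * (v.2.2.choose s : K))) • mon x₁ x₂ x₃ (v.1, v.2.1 + 1, s) := by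
    rw [h.eq_sum y f hf, Finset.sum_mul]
    refine Finset.sum_congr rfl fun v _ => ?_
    rw [smul_mul_assoc, Mr2 h32, Finset.smul_sum]
    refine Finset.sum_congr rfl fun s _ => ?_
    rw [smul_smul]
  have hx : x₁ ^ m = mon x₁ x₂ x₃ (m, 0, 0) := by simp [mon]
  have happ := congrArg (fun t => h.basis.repr t (m, 0, 0)) he
  rw [hx, ← h.basis_apply, h.basis.repr_self, Finsupp.single_apply, if_pos rfl] at happ
  rw [hy, Finset.sum_sigma'] at happ
  rw [h.repr_sum_apply (σ := (_ : ℕ×ℕ×ℕ) × ℕ) _ _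
    (fun p => (p.1.1, p.1.2.1 + 1, p.2))] at happ
  rw [Finset.sum_eq_zero] at happ
  · exact one_ne_zero happ
  · rintro ⟨v, s⟩ -
    rw [if_neg]
    intro hcon
    rw [Prod.ext_iff, Prod.ext_iff] at hcon
    exact Nat.succ_ne_zero _ hcon.2.1

lemma PBW.central (h : PBW (K := K) x₁ x₂ x₃) {z : A}
    (hz1 : x₁ * z = z * x₁) (hz2 : x₂ * z = z * x₂) (hz3 : x₃ * z = z * x₃) :
    z ∈ Subalgebra.center K A := by
  rw [Subalgebra.mem_center_iff]
  intro g
  have hmon : ∀ v : ℕ × ℕ × ℕ, Commute z (mon x₁ x₂ x₃ v) := by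
    intro v
    exact ((Commute.pow_right hz1.symm _).mul_right (Commute.pow_right hz2.symm _)).mul_right
      (Commute.pow_right hz3.symm _)
  obtain ⟨f, hf, -⟩ := h g
  rw [h.eq_sum g f hf, Finset.sum_mul, Finset.mul_sum]
  refine Finset.sum_congr rfl fun v _ => ?_
  rw [smul_mul_assoc, mul_smul_comm, (hmon v).eq]

end conds

section Bside
variable {B : Type*} [Ring B] [Algebra K B]

/-- bundled hypotheses -/
structure Setup (q α μ : K) (x₁ x₂ x₃ : A) (ι : A →ₐ[K] B) (y₁ y₂ : B) : Prop where
  hq : q ≠ 0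
  h21 : x₂ * x₁ = q • (x₁ * x₂)
  h31 : x₃ * x₁ = x₁ * x₃ + α • x₁
  h32 : x₃ * x₂ = x₂ * x₃ + μ • x₂
  pbw : PBW (K := K) x₁ x₂ x₃
  inj : Function.Injective ι
  u1 : ι x₁ * y₁ = 1
  u1' : y₁ * ι x₁ = 1
  u2 : ι x₂ * y₂ = 1
  u2' : y₂ * ι x₂ = 1
  frac : ∀ b : B, ∃ (a : A) (i j : ℕ), b * ι (x₁ ^ i * x₂ ^ j) = ι a

namespace Setup

variable {q α μ : K} {x₁ x₂ x₃ : A} {ι : A →ₐ[K] B} {y₁ y₂ : B}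
variable (S : Setup q α μ x₁ x₂ x₃ ι y₁ y₂)
include S

/-- `ι x₁` as a unit -/
def U1 : Bˣ := ⟨ι x₁, y₁, S.u1, S.u1'⟩
/-- `ι x₂` as a unit -/
def U2 : Bˣ := ⟨ι x₂, y₂, S.u2, S.u2'⟩

lemma U1_val : (S.U1 : B) = ι x₁ := rfl
lemma U2_val : (S.U2 : B) = ι x₂ := rfl
lemma U1_inv : ((S.U1)⁻¹ : Bˣ) = (y₁ : B) := rfl
lemma U2_inv : ((S.U2)⁻¹ : Bˣ) = (y₂ : B) := rfl

lemma cancel₁ {b b' : B} (h : ι x₁ * b = ι x₁ * b') : b = b' := by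
  have := congrArg (fun t => y₁ * t) h
  simpa [← mul_assoc, S.u1'] using this

lemma cancel₂ {b b' : B} (h : ι x₂ * b = ι x₂ * b') : b = b' := by
  have := congrArg (fun t => y₂ * t) h
  simpa [← mul_assoc, S.u2'] using this

lemma decomp (b : B) : ∃ (a : A) (i j : ℕ),
    b = ι a * ((S.U2 ^ j)⁻¹ : Bˣ) * ((S.U1 ^ i)⁻¹ : Bˣ) := by
  obtain ⟨a, i, j, hb⟩ := S.frac b
  refine ⟨a, i, j, ?_⟩
  have hval : ι (x₁ ^ i * x₂ ^ j) = (S.U1 ^ i : Bˣ) * (S.U2 ^ j : Bˣ) := by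
    rw [map_mul, map_pow, map_pow]
    simp [U1_val, U2_val]
  rw [hval] at hb
  rw [Units.eq_mul_inv_iff_mul_eq, Units.eq_mul_inv_iff_mul_eq, mul_assoc]
  exact hb

/-- an element commuting with the images of the generators is central -/
lemma central_of_commutes {c : B} (hc1 : Commute c (ι x₁)) (hc2 : Commute c (ι x₂))
    (hc3 : Commute c (ι x₃)) : c ∈ Subalgebra.center K B := by
  rw [Subalgebra.mem_center_iff]
  intro b
  obtain ⟨a, i, j, hb⟩ := S.decomp b
  have hmon : ∀ v : ℕ × ℕ × ℕ, Commute c (ι (mon x₁ x₂ x₃ v)) := by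
    intro v
    rw [mon, map_mul, map_mul, map_pow, map_pow, map_pow]
    exact ((hc1.pow_right _).mul_right (hc2.pow_right _)).mul_right (hc3.pow_right _)
  have hia : Commute c (ι a) := by
    obtain ⟨f, hf, -⟩ := S.pbw a
    rw [S.pbw.eq_sum a f hf, map_sum]
    refine Commute.sum_right _ _ _ fun v _ => ?_
    rw [map_smul]
    exact (hmon v).smul_right _
  have hinv1 : Commute c (((S.U1 ^ i)⁻¹ : Bˣ) : B) := by
    refine Commute.units_inv_right ?_
    have : ((S.U1 ^ i : Bˣ) : B) = ι x₁ ^ i := by simp [U1_val]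
    rw [Commute, SemiconjBy, this]
    exact (hc1.pow_right i)
  have hinv2 : Commute c (((S.U2 ^ j)⁻¹ : Bˣ) : B) := by
    refine Commute.units_inv_right ?_
    have : ((S.U2 ^ j : Bˣ) : B) = ι x₂ ^ j := by simp [U2_val]
    rw [Commute, SemiconjBy, this]
    exact (hc2.pow_right j)
  have : Commute c b := by
    rw [hb]
    exact (hia.mul_right hinv2).mul_right hinv1
  exact this.symm

lemma LM1 (i j : ℕ) : (x₁ ^ i * x₂ ^ j) * x₁ = q ^ j • (x₁ * (x₁ ^ i * x₂ ^ j)) := by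
  rw [mul_assoc, L1r S.h21 j, mul_smul_comm]
  congr 1
  rw [← mul_assoc, ← mul_assoc, ← pow_succ, ← pow_succ']

lemma LM2 (i j : ℕ) : x₂ * (x₁ ^ i * x₂ ^ j) = q ^ i • ((x₁ ^ i * x₂ ^ j) * x₂) := by
  rw [← mul_assoc, L1 S.h21 i, smul_mul_assoc, mul_assoc, mul_assoc]
  congr 2
  rw [← pow_succ, ← pow_succ']

lemma LM3 (i j : ℕ) : x₃ * (x₁ ^ i * x₂ ^ j)
    = (x₁ ^ i * x₂ ^ j) * x₃ + ((i : K) * α + (j : K) * μ) • (x₁ ^ i * x₂ ^ j) := by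
  rw [← mul_assoc, L3a S.h31 i, add_mul, smul_mul_assoc, mul_assoc, L3a S.h32 j, mul_add,
    mul_smul_comm, ← mul_assoc, add_smul]
  abel

lemma wrel3 {w : B} (hwc : w ∈ Subalgebra.center K B) {a : A} {i j : ℕ}
    (hw : w * ι (x₁ ^ i * x₂ ^ j) = ι a) :
    x₃ * a = a * x₃ + ((i : K) * α + (j : K) * μ) • a := by
  apply S.inj
  have hcomm := Subalgebra.mem_center_iff.mp hwc (ι x₃)
  calc ι (x₃ * a) = ι x₃ * (w * ι (x₁ ^ i * x₂ ^ j)) := by rw [map_mul, hw]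
    _ = w * ι (x₃ * (x₁ ^ i * x₂ ^ j)) := by
        rw [← mul_assoc, hcomm, mul_assoc, ← map_mul]
    _ = (w * ι (x₁ ^ i * x₂ ^ j)) * ι x₃
          + ((i : K) * α + (j : K) * μ) • (w * ι (x₁ ^ i * x₂ ^ j)) := by
        rw [S.LM3, map_add, map_mul, map_smul, mul_add, mul_smul_comm, mul_assoc]
    _ = ι (a * x₃ + ((i : K) * α + (j : K) * μ) • a) := by
        rw [hw, map_add, map_mul, map_smul]

lemma wrel1 {w : B} (hwc : w ∈ Subalgebra.center K B) {a : A} {i j : ℕ}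
    (hw : w * ι (x₁ ^ i * x₂ ^ j) = ι a) :
    a * x₁ = q ^ j • (x₁ * a) := by
  apply S.inj
  have hcomm := Subalgebra.mem_center_iff.mp hwc (ι x₁)
  calc ι (a * x₁) = (w * ι (x₁ ^ i * x₂ ^ j)) * ι x₁ := by rw [map_mul, hw]
    _ = w * ι ((x₁ ^ i * x₂ ^ j) * x₁) := by rw [mul_assoc, ← map_mul]
    _ = q ^ j • (ι x₁ * (w * ι (x₁ ^ i * x₂ ^ j))) := by
        rw [S.LM1, map_smul, map_mul, mul_smul_comm, ← mul_assoc, ← hcomm, mul_assoc]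
    _ = ι (q ^ j • (x₁ * a)) := by rw [hw, map_smul, map_mul]

lemma wrel2 {w : B} (hwc : w ∈ Subalgebra.center K B) {a : A} {i j : ℕ}
    (hw : w * ι (x₁ ^ i * x₂ ^ j) = ι a) :
    x₂ * a = q ^ i • (a * x₂) := by
  apply S.inj
  have hcomm := Subalgebra.mem_center_iff.mp hwc (ι x₂)
  calc ι (x₂ * a) = ι x₂ * (w * ι (x₁ ^ i * x₂ ^ j)) := by rw [map_mul, hw]
    _ = w * ι (x₂ * (x₁ ^ i * x₂ ^ j)) := by rw [← mul_assoc, hcomm, mul_assoc, ← map_mul]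
    _ = q ^ i • ((w * ι (x₁ ^ i * x₂ ^ j)) * ι x₂) := by
        rw [S.LM2, map_smul, map_mul, mul_smul_comm, mul_assoc]
    _ = ι (q ^ i • (a * x₂)) := by rw [hw, map_smul, map_mul]

lemma red1 {w : B} (hwc : w ∈ Subalgebra.center K B) {b : A} {i j : ℕ}
    (hw : w * ι (x₁ ^ (i + 1) * x₂ ^ j) = ι (x₁ * b)) :
    w * ι (x₁ ^ i * x₂ ^ j) = ι b := by
  have hcomm := Subalgebra.mem_center_iff.mp hwc (ι x₁)
  have h1 : x₁ ^ (i + 1) * x₂ ^ j = x₁ * (x₁ ^ i * x₂ ^ j) := by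
    rw [← mul_assoc, ← pow_succ']
  apply S.cancel₁
  calc ι x₁ * (w * ι (x₁ ^ i * x₂ ^ j)) = w * ι (x₁ ^ (i + 1) * x₂ ^ j) := by
        rw [← mul_assoc, hcomm, mul_assoc, ← map_mul, ← h1]
    _ = ι x₁ * ι b := by rw [hw, map_mul]

lemma red2 {w : B} (hwc : w ∈ Subalgebra.center K B) {b : A} {i j : ℕ}
    (hw : w * ι (x₁ ^ i * x₂ ^ (j + 1)) = ι (x₂ * b)) :
    w * ι (x₁ ^ i * x₂ ^ j) = ι (q ^ i • b) := by
  have hcomm := Subalgebra.mem_center_iff.mp hwc (ι x₂)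
  have h1 : x₂ * (x₁ ^ i * x₂ ^ j) = q ^ i • (x₁ ^ i * x₂ ^ (j + 1)) := by
    rw [S.LM2, mul_assoc, ← pow_succ]
  apply S.cancel₂
  calc ι x₂ * (w * ι (x₁ ^ i * x₂ ^ j)) = w * ι (x₂ * (x₁ ^ i * x₂ ^ j)) := by
        rw [← mul_assoc, hcomm, mul_assoc, ← map_mul]
    _ = q ^ i • (w * ι (x₁ ^ i * x₂ ^ (j + 1))) := by rw [h1, map_smul, mul_smul_comm]
    _ = ι x₂ * ι (q ^ i • b) := by rw [hw, ← map_smul, ← map_mul, mul_smul_comm]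

lemma build {w : B} (hwc : w ∈ Subalgebra.center K B) {a : A} {i j β1 β2 : ℕ}
    (hw : w * ι (x₁ ^ i * x₂ ^ j) = ι a)
    (hb1 : i ≤ β1) (hb2 : j ≤ β2) (hq1 : q ^ β1 = 1) (hq2 : q ^ β2 = 1)
    (hc : (β1 : K) * α + (β2 : K) * μ = 0) :
    ∃ z ∈ Subalgebra.center K A, x₁ ^ β1 * x₂ ^ β2 ∈ Subalgebra.center K A ∧
      w * ι (x₁ ^ β1 * x₂ ^ β2) = ι z := by
  set δ1 := β1 - i with hδ1
  set δ2 := β2 - j with hδ2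
  have hi : i + δ1 = β1 := by omega
  have hj : j + δ2 = β2 := by omega
  have hs0 : (q : K) ^ (δ1 * j) ≠ 0 := pow_ne_zero _ S.hq
  set z : A := (q ^ (δ1 * j))⁻¹ • (a * (x₁ ^ δ1 * x₂ ^ δ2)) with hz
  -- the splitting identity
  have hsplit : (x₁ ^ i * x₂ ^ j) * (x₁ ^ δ1 * x₂ ^ δ2)
      = q ^ (δ1 * j) • (x₁ ^ β1 * x₂ ^ β2) := by
    calc (x₁ ^ i * x₂ ^ j) * (x₁ ^ δ1 * x₂ ^ δ2)
        = x₁ ^ i * (x₂ ^ j * x₁ ^ δ1) * x₂ ^ δ2 := by simp only [mul_assoc]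
      _ = q ^ (δ1 * j) • (x₁ ^ i * (x₁ ^ δ1 * x₂ ^ j) * x₂ ^ δ2) := by
          rw [L1' S.h21 δ1 j, mul_smul_comm, smul_mul_assoc]
      _ = q ^ (δ1 * j) • (x₁ ^ β1 * x₂ ^ β2) := by
          rw [← mul_assoc, ← pow_add, hi, mul_assoc, ← pow_add, hj]
  -- relations for a
  have r1 := S.wrel1 hwc hw
  have r2 := S.wrel2 hwc hw
  have r3 := S.wrel3 hwc hw
  -- the image identity
  have himg : w * ι (x₁ ^ β1 * x₂ ^ β2) = ι z := by
    have h2 : x₁ ^ β1 * x₂ ^ β2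
        = (q ^ (δ1 * j))⁻¹ • ((x₁ ^ i * x₂ ^ j) * (x₁ ^ δ1 * x₂ ^ δ2)) := by
      rw [hsplit, inv_smul_smul₀ hs0]
    rw [h2, map_smul, mul_smul_comm, map_mul, ← mul_assoc, hw, ← map_mul, hz, map_smul]
  -- centrality of z
  have hz1 : x₁ * z = z * x₁ := by
    have e1 : x₁ * a = (q ^ j)⁻¹ • (a * x₁) := by
      rw [r1, inv_smul_smul₀ (pow_ne_zero _ S.hq)]
    have e2 : x₁ * (x₁ ^ δ1 * x₂ ^ δ2) = (q ^ δ2)⁻¹ • ((x₁ ^ δ1 * x₂ ^ δ2) * x₁) := by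
      rw [S.LM1 δ1 δ2, inv_smul_smul₀ (pow_ne_zero _ S.hq)]
    have key : x₁ * (a * (x₁ ^ δ1 * x₂ ^ δ2))
        = ((q ^ j)⁻¹ * (q ^ δ2)⁻¹) • ((a * (x₁ ^ δ1 * x₂ ^ δ2)) * x₁) := by
      calc x₁ * (a * (x₁ ^ δ1 * x₂ ^ δ2)) = (x₁ * a) * (x₁ ^ δ1 * x₂ ^ δ2) := by
            rw [mul_assoc]
        _ = (q ^ j)⁻¹ • (a * (x₁ * (x₁ ^ δ1 * x₂ ^ δ2))) := by
            rw [e1, smul_mul_assoc, mul_assoc]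
        _ = ((q ^ j)⁻¹ * (q ^ δ2)⁻¹) • ((a * (x₁ ^ δ1 * x₂ ^ δ2)) * x₁) := by
            rw [e2, mul_smul_comm, smul_smul, mul_assoc]
            simp only [mul_assoc]
    have hq12 : (q ^ j)⁻¹ * (q ^ δ2)⁻¹ = 1 := by
      rw [← mul_inv, ← pow_add, hj, hq2, inv_one]
    rw [hz, mul_smul_comm, key, hq12, one_smul, smul_mul_assoc]
  have hz2 : x₂ * z = z * x₂ := by
    have e2 : x₂ * (x₁ ^ δ1 * x₂ ^ δ2) = q ^ δ1 • ((x₁ ^ δ1 * x₂ ^ δ2) * x₂) := S.LM2 δ1 δ2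
    have key : x₂ * (a * (x₁ ^ δ1 * x₂ ^ δ2))
        = (q ^ i * q ^ δ1) • ((a * (x₁ ^ δ1 * x₂ ^ δ2)) * x₂) := by
      calc x₂ * (a * (x₁ ^ δ1 * x₂ ^ δ2)) = (x₂ * a) * (x₁ ^ δ1 * x₂ ^ δ2) := by
            rw [mul_assoc]
        _ = q ^ i • (a * (x₂ * (x₁ ^ δ1 * x₂ ^ δ2))) := by
            rw [r2, smul_mul_assoc, mul_assoc]
        _ = (q ^ i * q ^ δ1) • ((a * (x₁ ^ δ1 * x₂ ^ δ2)) * x₂) := by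
            rw [e2, mul_smul_comm, smul_smul, mul_assoc]
            simp only [mul_assoc]
    have hq12 : q ^ i * q ^ δ1 = 1 := by rw [← pow_add, hi, hq1]
    rw [hz, mul_smul_comm, key, hq12, one_smul, smul_mul_assoc]
  have hz3 : x₃ * z = z * x₃ := by
    have e2 := S.LM3 δ1 δ2
    have key : x₃ * (a * (x₁ ^ δ1 * x₂ ^ δ2))
        = (a * (x₁ ^ δ1 * x₂ ^ δ2)) * x₃
          + (((i : K) * α + (j : K) * μ) + ((δ1 : K) * α + (δ2 : K) * μ))
              • (a * (x₁ ^ δ1 * x₂ ^ δ2)) := by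
      calc x₃ * (a * (x₁ ^ δ1 * x₂ ^ δ2)) = (x₃ * a) * (x₁ ^ δ1 * x₂ ^ δ2) := by
            rw [mul_assoc]
        _ = a * (x₃ * (x₁ ^ δ1 * x₂ ^ δ2))
              + ((i : K) * α + (j : K) * μ) • (a * (x₁ ^ δ1 * x₂ ^ δ2)) := by
            rw [r3, add_mul, smul_mul_assoc, mul_assoc]
        _ = _ := by
            rw [e2, mul_add, mul_smul_comm, ← mul_assoc]
            simp only [add_smul]
            abel
    have hzero : (((i : K) * α + (j : K) * μ) + ((δ1 : K) * α + (δ2 : K) * μ)) = 0 := by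
      have c1 : (i : K) + (δ1 : K) = (β1 : K) := by
        rw [← Nat.cast_add, hi]
      have c2 : (j : K) + (δ2 : K) = (β2 : K) := by
        rw [← Nat.cast_add, hj]
      calc ((i : K) * α + (j : K) * μ) + ((δ1 : K) * α + (δ2 : K) * μ)
          = ((i : K) + (δ1 : K)) * α + ((j : K) + (δ2 : K)) * μ := by ring
        _ = (β1 : K) * α + (β2 : K) * μ := by rw [c1, c2]
        _ = 0 := hc
    rw [hz, mul_smul_comm, key, hzero, zero_smul, add_zero, smul_mul_assoc]
  have hzc : z ∈ Subalgebra.center K A := S.pbw.central hz1 hz2 hz3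
  -- centrality of the monomial
  have hm1 : x₁ * (x₁ ^ β1 * x₂ ^ β2) = (x₁ ^ β1 * x₂ ^ β2) * x₁ := by
    rw [S.LM1 β1 β2, hq2, one_smul]
  have hm2 : x₂ * (x₁ ^ β1 * x₂ ^ β2) = (x₁ ^ β1 * x₂ ^ β2) * x₂ := by
    rw [S.LM2 β1 β2, hq1, one_smul]
  have hm3 : x₃ * (x₁ ^ β1 * x₂ ^ β2) = (x₁ ^ β1 * x₂ ^ β2) * x₃ := by
    rw [S.LM3 β1 β2, hc, zero_smul, add_zero]
  exact ⟨z, hzc, S.pbw.central hm1 hm2 hm3, himg⟩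

omit S in
lemma NR_pow_inj (hq : q ≠ 0) (hNR : ∀ m : ℕ, 0 < m → q ^ m ≠ 1) {a b : ℕ}
    (h : q ^ a = q ^ b) : a = b := by
  rcases le_total a b with hab | hab
  · by_contra hne
    have hpos : 0 < b - a := by omega
    have : q ^ a * q ^ (b - a) = q ^ a * 1 := by
      rw [← pow_add, mul_one, Nat.add_sub_cancel' hab, h]
    exact hNR _ hpos (mul_left_cancel₀ (pow_ne_zero _ hq) this)
  · by_contra hne
    have hpos : 0 < a - b := by omega
    have : q ^ b * q ^ (a - b) = q ^ b * 1 := by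
      rw [← pow_add, mul_one, Nat.add_sub_cancel' hab, ← h]
    exact hNR _ hpos (mul_left_cancel₀ (pow_ne_zero _ hq) this)

omit S in
lemma rat_of_nat_combo [CharZero K] {a b c d : ℕ} {m : K}
    (h : (a : K) + (b : K) * m = (c : K) + (d : K) * m) (hbd : b ≠ d) :
    ∃ r : ℚ, (r : K) = m := by
  have hK : (((b : ℤ) - (d : ℤ) : ℤ) : K) * m = (((c : ℤ) - (a : ℤ) : ℤ) : K) := by
    push_cast
    linear_combination h
  have hne : (((b : ℤ) - (d : ℤ) : ℤ) : K) ≠ 0 := by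
    rw [Int.cast_ne_zero]
    intro hcon
    apply hbd
    omega
  refine ⟨(((c : ℤ) - (a : ℤ) : ℤ) : ℚ) / (((b : ℤ) - (d : ℤ) : ℤ) : ℚ), ?_⟩
  rw [Rat.cast_div, Rat.cast_intCast, Rat.cast_intCast]
  rw [div_eq_iff hne, mul_comm]
  exact hK.symm

lemma forward (p : ℕ) [CharP K p]
    (hαμ : (α = 1 ∧ μ ≠ -1) ∨ (α = 0 ∧ μ = 1))
    (hnc : ¬ ∃ n μ₁ μ₂ : ℕ, 0 < n ∧ IsPrimitiveRoot q n ∧ p = 0 ∧ α = 1 ∧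
      0 < μ₁ ∧ 0 < μ₂ ∧ Nat.Coprime μ₁ μ₂ ∧ (μ₂ : K) * μ = (μ₁ : K))
    {w : B} (hwc : w ∈ Subalgebra.center K B) :
    ∀ N i j a, i + j = N → w * ι (x₁ ^ i * x₂ ^ j) = ι a →
      ∃ z ∈ Subalgebra.center K A, ∃ β : ℕ × ℕ,
        (x₁ ^ β.1 * x₂ ^ β.2 ∈ Subalgebra.center K A) ∧
        w * ι (x₁ ^ β.1 * x₂ ^ β.2) = ι z := by
  intro N
  induction N using Nat.strong_induction_on with
  | _ N ih =>
  intro i j a hN hw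
  obtain ⟨f, hf, -⟩ := S.pbw a
  have ha : a = ∑ v ∈ f.support, f v • mon x₁ x₂ x₃ v := hf
  have r1 := S.wrel1 hwc hw
  have r2 := S.wrel2 hwc hw
  have r3 := S.wrel3 hwc hw
  have condA := S.pbw.sup3 S.h31 S.h32 a f ha _ r3
  have condB := S.pbw.supB S.h21 S.h31 a f ha j r1
  have condC := S.pbw.supC S.h21 S.h32 a f ha i r2
  -- reduction helpers
  have reduce1 : (∀ v ∈ f.support, 1 ≤ v.1) → i ≠ 0 →
      (∃ z ∈ Subalgebra.center K A, ∃ β : ℕ × ℕ,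
        (x₁ ^ β.1 * x₂ ^ β.2 ∈ Subalgebra.center K A) ∧
        w * ι (x₁ ^ β.1 * x₂ ^ β.2) = ι z) := by
    intro hall hi0
    have hfac := S.pbw.factor1 a f ha hall
    rw [hfac] at hw
    rw [show i = i - 1 + 1 by omega] at hw
    exact ih (i - 1 + j) (by omega) (i - 1) j _ rfl (S.red1 hwc hw)
  have reduce2 : (∀ v ∈ f.support, 1 ≤ v.2.1) → j ≠ 0 →
      (∃ z ∈ Subalgebra.center K A, ∃ β : ℕ × ℕ,
        (x₁ ^ β.1 * x₂ ^ β.2 ∈ Subalgebra.center K A) ∧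
        w * ι (x₁ ^ β.1 * x₂ ^ β.2) = ι z) := by
    intro hall hj0
    have hfac := S.pbw.factor2 S.hq S.h21 a f ha hall
    rw [hfac] at hw
    rw [show j = j - 1 + 1 by omega] at hw
    exact ih (i + (j - 1)) (by omega) i (j - 1) _ rfl (S.red2 hwc hw)
  have doBuild : ∀ β1 β2 : ℕ, i ≤ β1 → j ≤ β2 → q ^ β1 = 1 → q ^ β2 = 1 →
      (β1 : K) * α + (β2 : K) * μ = 0 →
      (∃ z ∈ Subalgebra.center K A, ∃ β : ℕ × ℕ,
        (x₁ ^ β.1 * x₂ ^ β.2 ∈ Subalgebra.center K A) ∧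
        w * ι (x₁ ^ β.1 * x₂ ^ β.2) = ι z) := by
    intro β1 β2 hb1 hb2 hqb1 hqb2 hcc
    obtain ⟨z, hzc, hmc, himg⟩ := S.build hwc hw hb1 hb2 hqb1 hqb2 hcc
    exact ⟨z, hzc, (β1, β2), hmc, himg⟩
  by_cases hfin : ∃ m : ℕ, 0 < m ∧ q ^ m = 1
  · -- q is a root of unity
    have hford : IsOfFinOrder q := by
      obtain ⟨m, hm0, hm1⟩ := hfin
      exact isOfFinOrder_iff_pow_eq_one.mpr ⟨m, hm0, hm1⟩
    set n := orderOf q with hn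
    have hnpos : 0 < n := IsOfFinOrder.orderOf_pos hford
    have hqn : q ^ n = 1 := pow_orderOf_eq_one q
    by_cases hp : p = 0
    · subst hp
      haveI : CharZero K := CharP.charP_to_charZero K
      rcases hαμ with ⟨hα, hμ⟩ | ⟨hα, hμ⟩
      · -- α = 1
        subst hα
        by_cases hrat : ∃ r : ℚ, (r : K) = μ
        · obtain ⟨r, hr⟩ := hrat
          have hdpos : 0 < r.den := r.pos
          have hden0 : ((r.den : ℕ) : K) ≠ 0 := Nat.cast_ne_zero.mpr (by omega)
          have hdenmul : ((r.den : ℕ) : K) * μ = ((r.num : ℤ) : K) := by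
            rw [← hr, Rat.cast_def, mul_div_cancel₀]
            exact hden0
          rcases lt_trichotomy r 0 with hr0 | hr0 | hr0
          · -- r < 0
            have hnum_neg : r.num < 0 := Rat.num_neg.mpr hr0
            have habs : ((r.num : ℤ) : K) = -((r.num.natAbs : ℕ) : K) := by
              calc ((r.num : ℤ) : K) = ((-(r.num.natAbs : ℤ) : ℤ) : K) :=
                    congrArg _ (by omega)
                _ = -(((r.num.natAbs : ℤ)) : K) := by rw [Int.cast_neg]
                _ = -((r.num.natAbs : ℕ) : K) := by rw [Int.cast_natCast]
            set μ₁ := r.num.natAbs with hμ₁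
            set μ₂ := r.den with hμ₂
            have hμ₁pos : 0 < μ₁ := Int.natAbs_pos.mpr (ne_of_lt hnum_neg)
            have hμ₂pos : 0 < μ₂ := r.pos
            have t := i + j + 1
            refine doBuild (n * (μ₁ * (i + j + 1))) (n * (μ₂ * (i + j + 1))) ?_ ?_ ?_ ?_ ?_
            · have h1 : (i + j + 1) ≤ μ₁ * (i + j + 1) := Nat.le_mul_of_pos_left _ hμ₁pos
              have h2 : μ₁ * (i + j + 1) ≤ n * (μ₁ * (i + j + 1)) := Nat.le_mul_of_pos_left _ hnpos
              omega
            · have h1 : (i + j + 1) ≤ μ₂ * (i + j + 1) := Nat.le_mul_of_pos_left _ hμ₂pos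
              have h2 : μ₂ * (i + j + 1) ≤ n * (μ₂ * (i + j + 1)) := Nat.le_mul_of_pos_left _ hnpos
              omega
            · rw [pow_mul, hqn, one_pow]
            · rw [pow_mul, hqn, one_pow]
            · have key : (μ₁ : K) + (μ₂ : K) * μ = 0 := by
                rw [hdenmul, habs]
                ring
              push_cast
              linear_combination ((n : K) * ((i : K) + (j : K) + 1)) * key
          · -- r = 0
            have hμ0 : μ = 0 := by rw [← hr, hr0]; simp
            have hv1 : ∀ v ∈ f.support, v.1 = i := by
              intro v hv
              have := condA v hv
              rw [hμ0] at this
              simp only [mul_one, mul_zero, add_zero] at this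
              exact_mod_cast this
            by_cases hi0 : i = 0
            · refine doBuild 0 (n * (j + 1)) (by omega) ?_ (by simp) ?_ ?_
              · have := Nat.le_mul_of_pos_left (j + 1) hnpos
                omega
              · rw [pow_mul, hqn, one_pow]
              · rw [hμ0]
                simp
            · exact reduce1 (fun v hv => by have := hv1 v hv; omega) hi0
          · -- r > 0 : contradiction with ¬(C7a)
            exfalso
            apply hnc
            have hnum_pos : 0 < r.num := Rat.num_pos.mpr hr0
            refine ⟨n, r.num.natAbs, r.den, hnpos, ?_, rfl, rfl,
              Int.natAbs_pos.mpr (ne_of_gt hnum_pos), r.pos, r.reduced, ?_⟩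
            · exact IsPrimitiveRoot.orderOf q
            · rw [hdenmul]
              calc ((r.num : ℤ) : K) = (((r.num.natAbs : ℤ)) : K) := congrArg _ (by omega)
                _ = ((r.num.natAbs : ℕ) : K) := Int.cast_natCast _
        · -- μ irrational
          have hvij : ∀ v ∈ f.support, v.1 = i ∧ v.2.1 = j := by
            intro v hv
            have hA := condA v hv
            simp only [mul_one] at hA
            by_cases hvj : v.2.1 = j
            · refine ⟨?_, hvj⟩
              rw [hvj] at hA
              have : (v.1 : K) = (i : K) := add_right_cancel hA
              exact_mod_cast this
            · exact absurd (rat_of_nat_combo hA hvj) hrat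
          by_cases hi0 : i = 0
          · by_cases hj0 : j = 0
            · subst hi0; subst hj0
              refine doBuild 0 0 le_rfl le_rfl (by simp) (by simp) (by simp)
            · exact reduce2 (fun v hv => by have := (hvij v hv).2; omega) hj0
          · exact reduce1 (fun v hv => by have := (hvij v hv).1; omega) hi0
      · -- α = 0, μ = 1
        have hv2 : ∀ v ∈ f.support, v.2.1 = j := by
          intro v hv
          have := condA v hv
          rw [hα, hμ] at this
          simp only [mul_zero, mul_one, zero_add] at this
          exact_mod_cast this
        by_cases hj0 : j = 0
        · refine doBuild (n * (i + 1)) 0 ?_ (by omega) ?_ (by simp) ?_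
          · have := Nat.le_mul_of_pos_left (i + 1) hnpos
            omega
          · rw [pow_mul, hqn, one_pow]
          · rw [hα, hμ]
            simp
        · exact reduce2 (fun v hv => by have := hv2 v hv; omega) hj0
    · -- p ≠ 0
      have hppos : 0 < p := Nat.pos_of_ne_zero hp
      have hpK : (p : K) = 0 := CharP.cast_eq_zero K p
      refine doBuild (n * (p * (i + 1))) (n * (p * (j + 1))) ?_ ?_ ?_ ?_ ?_
      · have h1 : (i + 1) ≤ p * (i + 1) := Nat.le_mul_of_pos_left _ hppos
        have h2 : p * (i + 1) ≤ n * (p * (i + 1)) := Nat.le_mul_of_pos_left _ hnpos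
        omega
      · have h1 : (j + 1) ≤ p * (j + 1) := Nat.le_mul_of_pos_left _ hppos
        have h2 : p * (j + 1) ≤ n * (p * (j + 1)) := Nat.le_mul_of_pos_left _ hnpos
        omega
      · rw [pow_mul, hqn, one_pow]
      · rw [pow_mul, hqn, one_pow]
      · push_cast
        rw [hpK]
        ring
  · -- q is not a root of unity
    have hNR : ∀ m : ℕ, 0 < m → q ^ m ≠ 1 := by
      intro m hm hqm
      exact hfin ⟨m, hm, hqm⟩
    have hvij : ∀ v ∈ f.support, v.1 = i ∧ v.2.1 = j := fun v hv =>
      ⟨NR_pow_inj S.hq hNR (condC v hv), NR_pow_inj S.hq hNR (condB v hv)⟩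
    by_cases hi0 : i = 0
    · by_cases hj0 : j = 0
      · subst hi0; subst hj0
        refine doBuild 0 0 le_rfl le_rfl (by simp) (by simp) (by simp)
      · exact reduce2 (fun v hv => by have := (hvij v hv).2; omega) hj0
    · exact reduce1 (fun v hv => by have := (hvij v hv).1; omega) hi0

/-- images of central elements are central -/
lemma central_image {z : A} (hz : z ∈ Subalgebra.center K A) :
    ι z ∈ Subalgebra.center K B := by
  have hcom : ∀ u : A, Commute (ι z) (ι u) := by
    intro u
    have := Subalgebra.mem_center_iff.mp hz u
    rw [Commute, SemiconjBy, ← map_mul, ← map_mul, ← this]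
  exact S.central_of_commutes (hcom x₁) (hcom x₂) (hcom x₃)

omit S in
lemma inv_central {c d : B} (hc : c ∈ Subalgebra.center K B)
    (h1 : c * d = 1) (h2 : d * c = 1) : d ∈ Subalgebra.center K B := by
  rw [Subalgebra.mem_center_iff] at hc ⊢
  intro b
  calc b * d = d * c * (b * d) := by rw [h2, one_mul]
    _ = d * (c * b) * d := by simp only [mul_assoc]
    _ = d * (b * c) * d := by rw [← hc b]
    _ = d * b * (c * d) := by simp only [mul_assoc]
    _ = d * b := by rw [h1, mul_one]

/-- the right-hand side set is contained in the centre -/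
lemma inc {w : B} {z : A} (hz : z ∈ Subalgebra.center K A) (β1 β2 : ℕ)
    (hm : x₁ ^ β1 * x₂ ^ β2 ∈ Subalgebra.center K A)
    (him : w * ι (x₁ ^ β1 * x₂ ^ β2) = ι z) : w ∈ Subalgebra.center K B := by
  set Uβ : Bˣ := S.U1 ^ β1 * S.U2 ^ β2 with hUβ
  have hval : (Uβ : B) = ι (x₁ ^ β1 * x₂ ^ β2) := by
    rw [hUβ, Units.val_mul, Units.val_pow_eq_pow_val, Units.val_pow_eq_pow_val,
      U1_val, U2_val, map_mul, map_pow, map_pow]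
  have hw : w = ι z * ((Uβ⁻¹ : Bˣ) : B) := by
    rw [Units.eq_mul_inv_iff_mul_eq, hval]
    exact him
  have h1 : ι (x₁ ^ β1 * x₂ ^ β2) * ((Uβ⁻¹ : Bˣ) : B) = 1 := by
    rw [← hval, Units.mul_inv]
  have h2 : ((Uβ⁻¹ : Bˣ) : B) * ι (x₁ ^ β1 * x₂ ^ β2) = 1 := by
    rw [← hval, Units.inv_mul]
  have hinv : ((Uβ⁻¹ : Bˣ) : B) ∈ Subalgebra.center K B :=
    inv_central (S.central_image hm) h1 h2
  rw [hw]
  exact Subalgebra.mul_mem _ (S.central_image hz) hinv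

/-- the relation `ι x₁ * y₂ = q • (y₂ * ι x₁)` -/
lemma X1y2 : ι x₁ * y₂ = q • (y₂ * ι x₁) := by
  have h21B : ι x₂ * ι x₁ = q • (ι x₁ * ι x₂) := by
    rw [← map_mul, ← map_mul, ← map_smul, S.h21]
  have e := congrArg (fun t => y₂ * t * y₂) h21B
  calc ι x₁ * y₂ = (y₂ * ι x₂) * ι x₁ * y₂ := by rw [S.u2', one_mul]
    _ = y₂ * (ι x₂ * ι x₁) * y₂ := by simp only [mul_assoc]
    _ = y₂ * (q • (ι x₁ * ι x₂)) * y₂ := by rw [h21B]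
    _ = q • (y₂ * ι x₁ * (ι x₂ * y₂)) := by
        rw [mul_smul_comm, smul_mul_assoc]
        simp only [mul_assoc]
    _ = q • (y₂ * ι x₁) := by rw [S.u2, mul_one]

/-- the relation `ι x₃ * y₂ = y₂ * ι x₃ + (-μ) • y₂` -/
lemma X3y2 : ι x₃ * y₂ = y₂ * ι x₃ + (-μ) • y₂ := by
  have h32B : ι x₃ * ι x₂ = ι x₂ * ι x₃ + μ • ι x₂ := by
    rw [← map_mul, ← map_mul, ← map_smul, ← map_add, S.h32]
  have key : y₂ * (ι x₃ * ι x₂) * y₂ = y₂ * (ι x₂ * ι x₃ + μ • ι x₂) * y₂ := by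
    rw [h32B]
  have lhs : y₂ * (ι x₃ * ι x₂) * y₂ = y₂ * ι x₃ := by
    calc y₂ * (ι x₃ * ι x₂) * y₂ = y₂ * ι x₃ * (ι x₂ * y₂) := by simp only [mul_assoc]
      _ = y₂ * ι x₃ := by rw [S.u2, mul_one]
  have rhs : y₂ * (ι x₂ * ι x₃ + μ • ι x₂) * y₂ = ι x₃ * y₂ + μ • y₂ := by
    rw [mul_add, add_mul, mul_smul_comm, smul_mul_assoc]
    congr 1
    · calc y₂ * (ι x₂ * ι x₃) * y₂ = (y₂ * ι x₂) * (ι x₃ * y₂) := by simp only [mul_assoc]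
        _ = ι x₃ * y₂ := by rw [S.u2', one_mul]
    · congr 1
      calc y₂ * ι x₂ * y₂ = (y₂ * ι x₂) * y₂ := rfl
        _ = y₂ := by rw [S.u2', one_mul]
  rw [lhs, rhs] at key
  rw [key, neg_smul]
  abel

/-- the candidate central element in case (C7a) -/
lemma revCentral (hα : α = 1) {n μ₁ μ₂ : ℕ}
    (hqn : q ^ n = 1) (hμμ : (μ₂ : K) * μ = (μ₁ : K)) :
    ι (x₁ ^ (n * μ₁)) * y₂ ^ (n * μ₂) ∈ Subalgebra.center K B := by
  set m := n * μ₁ with hm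
  set k := n * μ₂ with hk
  have hqm : q ^ m = 1 := by rw [hm, pow_mul, hqn, one_pow]
  have hqk : q ^ k = 1 := by rw [hk, pow_mul, hqn, one_pow]
  have hmk : (m : K) = (k : K) * μ := by
    rw [hm, hk]
    push_cast
    rw [mul_assoc, hμμ]
  set w₀ : B := ι (x₁ ^ m) * y₂ ^ k with hw₀
  -- commute with X1
  have hY : ι x₁ * y₂ ^ k = q ^ k • (y₂ ^ k * ι x₁) := L1 S.X1y2 k
  have hY' : ι x₁ * y₂ ^ k = y₂ ^ k * ι x₁ := by rw [hY, hqk, one_smul]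
  have hc1 : Commute w₀ (ι x₁) := by
    have c1 : Commute (ι (x₁ ^ m)) (ι x₁) := by
      rw [map_pow]
      exact (Commute.refl (ι x₁)).pow_left m
    have c2 : Commute (y₂ ^ k) (ι x₁) := hY'.symm
    exact c1.mul_left c2
  -- commute with X2
  have hc2 : Commute w₀ (ι x₂) := by
    have c1 : Commute (ι (x₁ ^ m)) (ι x₂) := by
      have := L1 (A := B) (q := q) (x₁ := ι x₁) (x₂ := ι x₂)
        (by rw [← map_mul, ← map_mul, ← map_smul, S.h21]) m
      rw [Commute, SemiconjBy, map_pow]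
      rw [this, hqm, one_smul]
    have c2 : Commute (y₂ ^ k) (ι x₂) := by
      have : y₂ * ι x₂ = ι x₂ * y₂ := by rw [S.u2', S.u2]
      exact Commute.pow_left this k
    exact c1.mul_left c2
  -- commute with X3
  have hc3 : Commute w₀ (ι x₃) := by
    have e1 : ι x₃ * ι (x₁ ^ m) = ι (x₁ ^ m) * ι x₃ + ((m : K) * α) • ι (x₁ ^ m) := by
      rw [← map_mul, ← map_mul, ← map_smul, ← map_add, L3a S.h31 m]
    have e2 : ι x₃ * y₂ ^ k = y₂ ^ k * ι x₃ + ((k : K) * (-μ)) • y₂ ^ k :=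
      L3a S.X3y2 k
    have key : ι x₃ * w₀ = w₀ * ι x₃ := by
      calc ι x₃ * w₀ = (ι x₃ * ι (x₁ ^ m)) * y₂ ^ k := by rw [hw₀, ← mul_assoc]
        _ = ι (x₁ ^ m) * (ι x₃ * y₂ ^ k) + ((m : K) * α) • w₀ := by
            rw [e1, add_mul, smul_mul_assoc, mul_assoc, hw₀]
        _ = w₀ * ι x₃ + ((k : K) * (-μ)) • w₀ + ((m : K) * α) • w₀ := by
            rw [e2, mul_add, mul_smul_comm, ← mul_assoc, hw₀]
        _ = w₀ * ι x₃ + (((k : K) * (-μ)) + ((m : K) * α)) • w₀ := by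
            rw [add_smul]
            abel
        _ = w₀ * ι x₃ := by
            have hco : ((k : K) * (-μ)) + ((m : K) * α) = 0 := by
              rw [hα, hmk]; ring
            rw [hco, zero_smul, add_zero]
    exact key.symm
  exact S.central_of_commutes hc1 hc2 hc3

/-- the candidate element is not in the right-hand side set -/
lemma revNotMem [CharZero K] (hα : α = 1) {n μ₁ μ₂ : ℕ}
    (hn : 0 < n) (hμ₁ : 0 < μ₁) (hμ₂ : 0 < μ₂)
    (hμμ : (μ₂ : K) * μ = (μ₁ : K)) :
    ¬ ∃ z ∈ Subalgebra.center K A, ∃ β : ℕ × ℕ,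
      (x₁ ^ β.1 * x₂ ^ β.2 ∈ Subalgebra.center K A) ∧
      (ι (x₁ ^ (n * μ₁)) * y₂ ^ (n * μ₂)) * ι (x₁ ^ β.1 * x₂ ^ β.2) = ι z := by
  rintro ⟨z, hz, ⟨β1, β2⟩, hm, him⟩
  simp only at hm him
  -- the central monomial must be trivial
  have hcc : (β1 : K) * α + (β2 : K) * μ = 0 := by
    have h3 := Subalgebra.mem_center_iff.mp hm x₃
    rw [S.LM3 β1 β2] at h3
    have : ((β1 : K) * α + (β2 : K) * μ) • (x₁ ^ β1 * x₂ ^ β2) = 0 := by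
      nth_rewrite 2 [← add_zero (x₁ ^ β1 * x₂ ^ β2 * x₃)] at h3
      exact add_left_cancel h3
    have hne : x₁ ^ β1 * x₂ ^ β2 ≠ 0 := by
      have := S.pbw.mon_ne_zero (β1, β2, 0)
      simpa [mon] using this
    rcases smul_eq_zero.mp this with h | h
    · exact h
    · exact absurd h hne
  have hzero : β1 = 0 ∧ β2 = 0 := by
    have h2 : (β1 : K) * (μ₂ : K) + (β2 : K) * (μ₁ : K) = 0 := by
      rw [hα] at hcc
      calc (β1 : K) * (μ₂ : K) + (β2 : K) * (μ₁ : K)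
          = (μ₂ : K) * ((β1 : K) * 1 + (β2 : K) * μ) := by
            rw [← hμμ]; ring
        _ = 0 := by rw [hcc, mul_zero]
    have h3 : ((β1 * μ₂ + β2 * μ₁ : ℕ) : K) = 0 := by push_cast; linear_combination h2
    have h4 : β1 * μ₂ + β2 * μ₁ = 0 := by exact_mod_cast h3
    constructor <;> nlinarith [h4, hμ₁, hμ₂]
  obtain ⟨hb1, hb2⟩ := hzero
  subst hb1; subst hb2
  simp only [pow_zero, mul_one, map_one] at him
  -- so x₁ ^ (n μ₁) = z * x₂ ^ (n μ₂)
  have hy2X2 : (y₂ ^ (n * μ₂)) * (ι x₂) ^ (n * μ₂) = 1 := by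
    have hcy : Commute y₂ (ι x₂) := by rw [Commute, SemiconjBy, S.u2', S.u2]
    rw [← hcy.mul_pow, S.u2', one_pow]
  have key : ι (x₁ ^ (n * μ₁)) = ι (z * x₂ ^ (n * μ₂)) := by
    have := congrArg (fun t => t * (ι x₂) ^ (n * μ₂)) him
    rw [mul_assoc, hy2X2, mul_one] at this
    rw [this, map_mul, map_pow]
  have keyA : x₁ ^ (n * μ₁) = z * x₂ ^ (n * μ₂) := S.inj key
  -- contradiction via the PBW basis
  have hk : n * μ₂ = (n * μ₂ - 1) + 1 := by
    have : 0 < n * μ₂ := Nat.mul_pos hn hμ₂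
    omega
  rw [hk, pow_succ, ← mul_assoc] at keyA
  exact S.pbw.not_x1pow_eq_mul_x2 S.h32 (n * μ₁) (z * x₂ ^ (n * μ₂ - 1)) keyA

end Setup
end Bside
end BQAux
end BQAuxSection

theorem statement15 (p : ℕ) [CharP K p] (q α μ : K) (x₁ x₂ x₃ : A)
    (hbq : IsBiQuad q α μ x₁ x₂ x₃)
    {B : Type*} [Ring B] [Algebra K B] (ι : A →ₐ[K] B) (y₁ y₂ : B)
    (hloc : IsOreLoc ι x₁ x₂ y₁ y₂) :
    (¬ ∃ n μ₁ μ₂, CaseC7a p n μ₁ μ₂ q α μ) ↔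
      ((Subalgebra.center K B : Set B) =
        {w : B | ∃ z ∈ Subalgebra.center K A, ∃ β : ℕ × ℕ,
          x₁ ^ β.1 * x₂ ^ β.2 ∈ Subalgebra.center K A ∧
          w * ι (x₁ ^ β.1 * x₂ ^ β.2) = ι z}) := by
  obtain ⟨hq0, hq1, hαμ, h21, h31, h32, hPBW⟩ := hbq
  obtain ⟨hinj, hu1, hu1', hu2, hu2', hfrac⟩ := hloc
  have h21' : x₂ * x₁ = q • (x₁ * x₂) := by rw [h21, Algebra.smul_def]
  have h31' : x₃ * x₁ = x₁ * x₃ + α • x₁ := by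
    rw [h31, mul_add, ← Algebra.commutes α x₁, ← Algebra.smul_def]
  have h32' : x₃ * x₂ = x₂ * x₃ + μ • x₂ := by
    rw [h32, mul_add, ← Algebra.commutes μ x₂, ← Algebra.smul_def]
  have S : BQAux.Setup q α μ x₁ x₂ x₃ ι y₁ y₂ :=
    ⟨hq0, h21', h31', h32', hPBW, hinj, hu1, hu1', hu2, hu2', hfrac⟩
  constructor
  · intro hnc
    ext w
    constructor
    · intro hwc
      rw [SetLike.mem_coe] at hwc
      obtain ⟨a, i, j, hw⟩ := hfrac w
      have hnc' : ¬ ∃ n μ₁ μ₂ : ℕ, 0 < n ∧ IsPrimitiveRoot q n ∧ p = 0 ∧ α = 1 ∧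
          0 < μ₁ ∧ 0 < μ₂ ∧ Nat.Coprime μ₁ μ₂ ∧ (μ₂ : K) * μ = (μ₁ : K) := by
        rintro ⟨n, μ₁, μ₂, h⟩
        exact hnc ⟨n, μ₁, μ₂, h⟩
      obtain ⟨z, hz, β, hm, him⟩ := S.forward p hαμ hnc' hwc (i + j) i j a rfl hw
      exact ⟨z, hz, β, hm, him⟩
    · rintro ⟨z, hz, ⟨β1, β2⟩, hm, him⟩
      rw [SetLike.mem_coe]
      exact S.inc hz β1 β2 hm him
  · intro hset
    rintro ⟨n, μ₁, μ₂, hC⟩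
    obtain ⟨hn, hprim, hp, hα, hμ₁, hμ₂, hcop, hμμ⟩ := hC
    subst hp
    haveI : CharZero K := CharP.charP_to_charZero K
    have hqn : q ^ n = 1 := hprim.pow_eq_one
    have hwc := S.revCentral hα hqn hμμ
    have hmem : (ι (x₁ ^ (n * μ₁)) * y₂ ^ (n * μ₂)) ∈
        {w : B | ∃ z ∈ Subalgebra.center K A, ∃ β : ℕ × ℕ,
          x₁ ^ β.1 * x₂ ^ β.2 ∈ Subalgebra.center K A ∧
          w * ι (x₁ ^ β.1 * x₂ ^ β.2) = ι z} := by
      rw [← hset]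
      exact SetLike.mem_coe.mpr hwc
    exact S.revNotMem hα hn hμ₁ hμ₂ hμμ hmem

end
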